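/- KKT sufficiency for the variable-divergence problem (Theorem 3 converse direction): suppose (x, y) satisfies the flow conservation equations ∑_a y_{1sa} = x_{1s}, ∑_a y_{t+1,sa} = x_{t+1,s} + ∑_{s',a}P_{s'as}y_{ts'a}, y ≥ 0, and there exists v with u_{tsa} = φ_{tsa}(y_{tsa}), v_{ts} = ψ_{ts}(x_{ts}), v_{Ts} = min_a u_{Tsa}, v_{ts} = min_a(u_{tsa} + ∑_{s'}P_{sas'}v_{t+1,s'}) for t < T, and y_{tsa} > 0 implies a attains the respective minimum. Then (x, y) minimizes ∑_{t,s,a}∫_0^{y_{tsa}}φ_{tsa}(α)dα − ∑_{t,s}∫_0^{x_{ts}}ψ_{ts}(α)dα over all feasible (x', y'). -/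
import Mathlib


open Finset

/-- Feasibility for the variable-divergence optimal flow problem (P-5). -/
def FeasVD (T S A : ℕ) (hT : 0 < T)
    (P : Fin S → Fin A → Fin S → ℝ)
    (x : Fin T → Fin S → ℝ) (y : Fin T → Fin S → Fin A → ℝ) : Prop :=
  (∀ t s a, 0 ≤ y t s a) ∧
  (∀ s, ∑ a, y ⟨0, hT⟩ s a = x ⟨0, hT⟩ s) ∧
  (∀ (t : ℕ) (ht : t + 1 < T) (s : Fin S),
    ∑ a, y ⟨t + 1, ht⟩ s a
      = x ⟨t + 1, ht⟩ s
        + ∑ s', ∑ a, P s' a s * y ⟨t, lt_trans (Nat.lt_succ_self t) ht⟩ s' a)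

open intervalIntegral in
lemma grad_ineq {f : ℝ → ℝ} (hc : Continuous f) (hm : Monotone f) (b c : ℝ) :
    f b * (c - b) ≤ (∫ α in (0:ℝ)..c, f α) - ∫ α in (0:ℝ)..b, f α := by
  have hint : ∀ p q : ℝ, IntervalIntegrable f MeasureTheory.volume p q :=
    fun p q => hc.intervalIntegrable p q
  have h1 : (∫ α in (0:ℝ)..c, f α) - ∫ α in (0:ℝ)..b, f α = ∫ α in b..c, f α := by
    rw [← intervalIntegral.integral_add_adjacent_intervals (hint 0 b) (hint b c)]; ring
  rw [h1]
  rcases le_total b c with h | h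
  · have h2 : ∫ _ in b..c, f b ≤ ∫ α in b..c, f α :=
      intervalIntegral.integral_mono_on h (intervalIntegrable_const) (hint b c)
        (fun z hz => hm hz.1)
    simpa [intervalIntegral.integral_const, smul_eq_mul, mul_comm] using h2
  · have h2 : ∫ α in c..b, f α ≤ ∫ _ in c..b, f b :=
      intervalIntegral.integral_mono_on h (hint c b) intervalIntegrable_const
        (fun z hz => hm hz.2)
    rw [intervalIntegral.integral_symm]
    simp only [intervalIntegral.integral_const, smul_eq_mul] at h2
    nlinarith

theorem variable_divergence_kkt_sufficiency
    (T S A : ℕ) (hT : 0 < T) (hS : 0 < S) (hA : 0 < A)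
    (P : Fin S → Fin A → Fin S → ℝ)
    (hP : ∀ s a s', 0 ≤ P s a s')
    (hP1 : ∀ s a, ∑ s', P s a s' = 1)
    (φ : Fin T → Fin S → Fin A → ℝ → ℝ)
    (hφc : ∀ t s a, Continuous (φ t s a)) (hφm : ∀ t s a, Monotone (φ t s a))
    (ψ : Fin T → Fin S → ℝ → ℝ)
    (hψc : ∀ t s, Continuous (ψ t s)) (hψm : ∀ t s, Antitone (ψ t s))
    (x : Fin T → Fin S → ℝ) (y : Fin T → Fin S → Fin A → ℝ)
    (hfeas : FeasVD T S A hT P x y)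
    (u : Fin T → Fin S → Fin A → ℝ)
    (hu : ∀ t s a, u t s a = φ t s a (y t s a))
    (v : Fin T → Fin S → ℝ)
    (hv : ∀ t s, v t s = ψ t s (x t s))
    (hvT : ∀ s : Fin S,
      IsLeast (Set.range fun a => u ⟨T - 1, Nat.sub_lt hT one_pos⟩ s a)
        (v ⟨T - 1, Nat.sub_lt hT one_pos⟩ s))
    (hvB : ∀ (t : ℕ) (ht : t + 1 < T) (s : Fin S),
      IsLeast
        (Set.range fun a =>
          u ⟨t, lt_trans (Nat.lt_succ_self t) ht⟩ s a
            + ∑ s', P s a s' * v ⟨t + 1, ht⟩ s')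
        (v ⟨t, lt_trans (Nat.lt_succ_self t) ht⟩ s))
    (hcsT : ∀ (s : Fin S) (a : Fin A),
      0 < y ⟨T - 1, Nat.sub_lt hT one_pos⟩ s a →
        v ⟨T - 1, Nat.sub_lt hT one_pos⟩ s = u ⟨T - 1, Nat.sub_lt hT one_pos⟩ s a)
    (hcs : ∀ (t : ℕ) (ht : t + 1 < T) (s : Fin S) (a : Fin A),
      0 < y ⟨t, lt_trans (Nat.lt_succ_self t) ht⟩ s a →
        v ⟨t, lt_trans (Nat.lt_succ_self t) ht⟩ s
          = u ⟨t, lt_trans (Nat.lt_succ_self t) ht⟩ s a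
            + ∑ s', P s a s' * v ⟨t + 1, ht⟩ s') :
    ∀ x' y', FeasVD T S A hT P x' y' →
      (∑ t, ∑ s, ∑ a, ∫ α in (0:ℝ)..(y t s a), φ t s a α)
          - (∑ t, ∑ s, ∫ α in (0:ℝ)..(x t s), ψ t s α)
        ≤ (∑ t, ∑ s, ∑ a, ∫ α in (0:ℝ)..(y' t s a), φ t s a α)
            - ∑ t, ∑ s, ∫ α in (0:ℝ)..(x' t s), ψ t s α := by
  intro x' y' hfeas'
  obtain ⟨hy0, hx0, hxs⟩ := hfeas
  obtain ⟨hy0', hx0', hxs'⟩ := hfeas'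
  set c : Fin T → Fin S → Fin A → ℝ := fun t s a =>
    if h : (t : ℕ) + 1 < T then ∑ s', P s a s' * v ⟨(t : ℕ) + 1, h⟩ s' else 0 with hc
  -- pointwise complementary slackness bound
  have hpt : ∀ (t : Fin T) (s : Fin S) (a : Fin A),
      0 ≤ (u t s a + c t s a - v t s) * (y' t s a - y t s a) := by
    intro t s a
    have hmem : v t s ≤ u t s a + c t s a ∧
        (0 < y t s a → v t s = u t s a + c t s a) := by
      by_cases h : (t : ℕ) + 1 < T
      · have hle := (hvB (t : ℕ) h s).2 ⟨a, rfl⟩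
        have hcv : c t s a = ∑ s', P s a s' * v ⟨(t : ℕ) + 1, h⟩ s' := by
          simp only [hc]; rw [dif_pos h]
        constructor
        · rw [hcv]; exact hle
        · intro hy; rw [hcv]; exact hcs (t : ℕ) h s a hy
      · have hteq : t = ⟨T - 1, Nat.sub_lt hT one_pos⟩ := by
          apply Fin.ext; have := t.isLt; simp; omega
        have hcv : c t s a = 0 := by
          simp only [hc]; rw [dif_neg h]
        constructor
        · rw [hcv, hteq, add_zero]; exact (hvT s).2 ⟨a, rfl⟩
        · intro hy; rw [hcv, hteq, add_zero]
          exact hcsT s a (hteq ▸ hy)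
    rcases eq_or_lt_of_le (hy0 t s a) with h0 | h0
    · have := hmem.1
      have := hy0' t s a
      nlinarith
    · have hz : u t s a + c t s a - v t s = 0 := by rw [hmem.2 h0]; ring
      rw [hz, zero_mul]
  -- the key flow identity
  have hstar : ∑ t, ∑ s, v t s * ((∑ a, (y' t s a - y t s a)) - (x' t s - x t s))
      = ∑ t, ∑ s, ∑ a, c t s a * (y' t s a - y t s a) := by
    have hL : ∑ t, ∑ s, v t s * ((∑ a, (y' t s a - y t s a)) - (x' t s - x t s))
        = ∑ i ∈ Finset.range T, (if h : i < T then
            ∑ s, v ⟨i, h⟩ s * ((∑ a, (y' ⟨i, h⟩ s a - y ⟨i, h⟩ s a))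
              - (x' ⟨i, h⟩ s - x ⟨i, h⟩ s)) else 0) := by
      rw [← Fin.sum_univ_eq_sum_range]
      refine Finset.sum_congr rfl fun t _ => ?_
      rw [dif_pos t.isLt]
    have hR : ∑ t, ∑ s, ∑ a, c t s a * (y' t s a - y t s a)
        = ∑ i ∈ Finset.range T, (if h : i < T then
            ∑ s, ∑ a, c ⟨i, h⟩ s a * (y' ⟨i, h⟩ s a - y ⟨i, h⟩ s a) else 0) := by
      rw [← Fin.sum_univ_eq_sum_range]
      refine Finset.sum_congr rfl fun t _ => ?_
      rw [dif_pos t.isLt]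
    rw [hL, hR]
    rw [show Finset.range T = Finset.range ((T - 1) + 1) from by congr 1; omega]
    rw [Finset.sum_range_succ', Finset.sum_range_succ]
    have hF0 : (if h : 0 < T then
        ∑ s, v ⟨0, h⟩ s * ((∑ a, (y' ⟨0, h⟩ s a - y ⟨0, h⟩ s a))
          - (x' ⟨0, h⟩ s - x ⟨0, h⟩ s)) else 0) = 0 := by
      rw [dif_pos hT]
      apply Finset.sum_eq_zero; intro s _
      have hd : ∑ a, (y' ⟨0, hT⟩ s a - y ⟨0, hT⟩ s a)
          = x' ⟨0, hT⟩ s - x ⟨0, hT⟩ s := by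
        rw [Finset.sum_sub_distrib, hx0, hx0']
      rw [hd]; ring
    have hHT : (if h : T - 1 < T then
        ∑ s, ∑ a, c ⟨T - 1, h⟩ s a * (y' ⟨T - 1, h⟩ s a - y ⟨T - 1, h⟩ s a) else 0) = 0 := by
      rw [dif_pos (Nat.sub_lt hT one_pos)]
      apply Finset.sum_eq_zero; intro s _
      apply Finset.sum_eq_zero; intro a _
      have hcz : c ⟨T - 1, Nat.sub_lt hT one_pos⟩ s a = 0 := by
        simp only [hc]; rw [dif_neg]; simp; omega
      rw [hcz, zero_mul]
    rw [hF0, hHT, add_zero, add_zero]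
    apply Finset.sum_congr rfl
    intro i hi
    have hi1 : i + 1 < T := by have := Finset.mem_range.mp hi; omega
    have hiT : i < T := by omega
    rw [dif_pos hi1, dif_pos hiT]
    have hd : ∀ s, (∑ a, (y' ⟨i + 1, hi1⟩ s a - y ⟨i + 1, hi1⟩ s a))
        - (x' ⟨i + 1, hi1⟩ s - x ⟨i + 1, hi1⟩ s)
        = ∑ s', ∑ a, P s' a s *
            (y' ⟨i, hiT⟩ s' a - y ⟨i, hiT⟩ s' a) := by
      intro s
      have h1 := hxs i hi1 s
      have h2 := hxs' i hi1 s
      have e1 : (⟨i, lt_trans (Nat.lt_succ_self i) hi1⟩ : Fin T) = ⟨i, hiT⟩ := rfl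
      rw [e1] at h1 h2
      have h3 : ∑ s', ∑ a, P s' a s * (y' ⟨i, hiT⟩ s' a - y ⟨i, hiT⟩ s' a)
          = (∑ s', ∑ a, P s' a s * y' ⟨i, hiT⟩ s' a)
            - ∑ s', ∑ a, P s' a s * y ⟨i, hiT⟩ s' a := by
        rw [← Finset.sum_sub_distrib]
        apply Finset.sum_congr rfl; intro s' _
        rw [← Finset.sum_sub_distrib]
        apply Finset.sum_congr rfl; intro a _
        ring
      rw [Finset.sum_sub_distrib, h1, h2, h3]
      ring
    have hcv : ∀ s a, c ⟨i, hiT⟩ s a = ∑ s', P s a s' * v ⟨i + 1, hi1⟩ s' := by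
      intro s a; simp only [hc]; rw [dif_pos (show ((⟨i, hiT⟩ : Fin T) : ℕ) + 1 < T from hi1)]
    simp only [hd, hcv]
    simp only [Finset.mul_sum, Finset.sum_mul]
    rw [Finset.sum_comm]
    apply Finset.sum_congr rfl; intro s _
    rw [Finset.sum_comm]
    apply Finset.sum_congr rfl; intro a _
    apply Finset.sum_congr rfl; intro s' _
    ring
  -- summing the pointwise bounds
  have h0 : (0:ℝ) ≤ ∑ t, ∑ s, ∑ a,
      (u t s a + c t s a - v t s) * (y' t s a - y t s a) :=
    Finset.sum_nonneg fun t _ => Finset.sum_nonneg fun s _ =>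
      Finset.sum_nonneg fun a _ => hpt t s a
  have hexp : ∑ t, ∑ s, ∑ a, (u t s a + c t s a - v t s) * (y' t s a - y t s a)
      = (∑ t, ∑ s, ∑ a, u t s a * (y' t s a - y t s a))
        + (∑ t, ∑ s, ∑ a, c t s a * (y' t s a - y t s a))
        - ∑ t, ∑ s, v t s * ∑ a, (y' t s a - y t s a) := by
    simp only [Finset.mul_sum, ← Finset.sum_add_distrib, ← Finset.sum_sub_distrib]
    apply Finset.sum_congr rfl; intro t _
    apply Finset.sum_congr rfl; intro s _
    apply Finset.sum_congr rfl; intro a _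
    ring
  have hsplit : ∑ t, ∑ s, v t s * ((∑ a, (y' t s a - y t s a)) - (x' t s - x t s))
      = (∑ t, ∑ s, v t s * ∑ a, (y' t s a - y t s a))
        - ∑ t, ∑ s, v t s * (x' t s - x t s) := by
    simp only [← Finset.sum_sub_distrib]
    apply Finset.sum_congr rfl; intro t _
    apply Finset.sum_congr rfl; intro s _
    ring
  have key : ∑ t, ∑ s, v t s * (x' t s - x t s)
      ≤ ∑ t, ∑ s, ∑ a, u t s a * (y' t s a - y t s a) := by
    rw [hexp] at h0
    rw [hsplit] at hstar
    linarith
  -- gradient inequalities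
  have hA : ∑ t, ∑ s, ∑ a, u t s a * (y' t s a - y t s a)
      ≤ (∑ t, ∑ s, ∑ a, ∫ α in (0:ℝ)..(y' t s a), φ t s a α)
        - ∑ t, ∑ s, ∑ a, ∫ α in (0:ℝ)..(y t s a), φ t s a α := by
    simp only [← Finset.sum_sub_distrib]
    apply Finset.sum_le_sum; intro t _
    apply Finset.sum_le_sum; intro s _
    apply Finset.sum_le_sum; intro a _
    rw [hu]
    exact grad_ineq (hφc t s a) (hφm t s a) _ _
  have hB : (∑ t, ∑ s, ∫ α in (0:ℝ)..(x' t s), ψ t s α)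
        - (∑ t, ∑ s, ∫ α in (0:ℝ)..(x t s), ψ t s α)
      ≤ ∑ t, ∑ s, v t s * (x' t s - x t s) := by
    simp only [← Finset.sum_sub_distrib]
    apply Finset.sum_le_sum; intro t _
    apply Finset.sum_le_sum; intro s _
    rw [hv]
    have := grad_ineq (f := fun z => -(ψ t s z)) (hψc t s).neg
      (fun p q hpq => neg_le_neg (hψm t s hpq)) (x t s) (x' t s)
    simp only [intervalIntegral.integral_neg] at this
    nlinarith
  linarith
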